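/- arXiv:1907.02019 — 3 statements merged into one kernel-verified Lean document; each statement's English description precedes it below -/
import Mathlib

section
/- Let Λ be a Banach space, t₀ ≥ 0, a > 0 and I = [t₀, t₀ + a]. Let S, K : [0, a] → L(Λ) be operator-norm continuous families of bounded linear operators on Λ and set ζ₁ := sup_{t ∈ [0,a]} max(‖S(t)‖, ‖K(t)‖). Let R > 0, B_R := {x ∈ Λ : ‖x‖ ≤ R}, and let Ω := C(I, B_R) be the set of continuous functions I → Λ taking values in B_R, equipped with the sup norm. Let σ : I → I be absolutely continuous with σ′(s) ≥ b > 0 for a.e. s ∈ I. Let φ : I × Λ → Λ be continuous with ‖φ(s, x) − φ(s, y)‖ ≤ δ‖x − y‖ for all s ∈ I and x, y ∈ B_R, and set ζ₂ := sup_{s ∈ I} ‖φ(s, 0)‖. Let g : Ω → Λ satisfy ‖g(μ₁) − g(μ₂)‖ ≤ λ‖μ₁ − μ₂‖_∞ for all μ₁, μ₂ ∈ Ω, and set ζ₃ := sup_{μ ∈ Ω} ‖g(μ)‖. Let ξ₀ ∈ Λ and define the operator F by (Fμ)(t) := S(t − t₀)ξ₀ − S(t − t₀)g(μ) + ∫_{t₀}^{t}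 K(t − s) φ(s, μ(σ(s))) ds for μ ∈ Ω and t ∈ I. If ζ₁(‖ξ₀‖ + ζ₃ + aδR/b + aζ₂) ≤ R, then F maps Ω into Ω, i.e., for every μ ∈ Ω the function Fμ is continuous on I and ‖(Fμ)(t)‖ ≤ R for all t ∈ I. -/
/-!
For `t ∈ I`, `(Fμ)(t) = S(t - t₀)(ξ₀ - g μ) + ∫_{t₀}^t K(t - s) φ(s, μ(σ s)) ds`. Each operator
has norm at most `ζ₁`, `‖g μ‖ ≤ ζ₃`, and the Lipschitz bound at `0` gives
`‖φ(s, x)‖ ≤ δR + ζ₂` on `B_R`, so `‖(Fμ)(t)‖ ≤ ζ₁ (‖ξ₀‖ + ζ₃ + a (δR + ζ₂))`. The factor `1/b`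
costs nothing: `σ` maps `I` into itself while `σ(t₀ + a) - σ(t₀) ≥ a b`, so `b ≤ 1`.
Continuity: `σ` is continuous as a primitive, hence so is `s ↦ φ(s, μ(σ s))` on `I`, and a
Volterra integral of continuous data is continuous.
-/

open MeasureTheory Set

theorem ContinuousOn.exists_continuous_eqOn_Icc {α β : Type*} [LinearOrder α]
    [TopologicalSpace α] [OrderTopology α] [TopologicalSpace β] {a b : α} {f : α → β}
    (hab : a ≤ b) (hf : ContinuousOn f (Icc a b)) :
    ∃ f' : α → β, Continuous f' ∧ EqOn f' f (Icc a b) :=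
  ⟨IccExtend hab ((Icc a b).domRestrict f), hf.domRestrict.Icc_extend',
    fun _ hx => IccExtend_of_mem hab _ hx⟩

theorem ContinuousOn.of_eq_add_intervalIntegral {E : Type*} [NormedAddCommGroup E]
    [NormedSpace ℝ E] {σ σ' : ℝ → E} {t₀ t₁ : ℝ} (ht : t₀ ≤ t₁)
    (hσ' : IntegrableOn σ' (Icc t₀ t₁))
    (hσ : ∀ t ∈ Icc t₀ t₁, σ t = σ t₀ + ∫ s in t₀..t, σ' s) :
    ContinuousOn σ (Icc t₀ t₁) := by
  rw [← uIcc_of_le ht] at hσ' ⊢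
  exact (continuousOn_const.add (intervalIntegral.continuousOn_primitive_interval hσ')).congr
    fun t htI => hσ t (uIcc_of_le ht ▸ htI)

theorem mul_sub_le_intervalIntegral_of_ae_le {f : ℝ → ℝ} {t₀ t₁ b : ℝ} (ht : t₀ ≤ t₁)
    (hf : IntegrableOn f (Icc t₀ t₁)) (hb : ∀ᵐ s, s ∈ Icc t₀ t₁ → b ≤ f s) :
    b * (t₁ - t₀) ≤ ∫ s in t₀..t₁, f s := by
  have hle : (fun _ => b) ≤ᵐ[volume.restrict (Icc t₀ t₁)] f := by
    filter_upwards [ae_restrict_of_ae hb, ae_restrict_mem measurableSet_Icc] with s hs hsI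
    exact hs hsI
  have hfi : IntervalIntegrable f volume t₀ t₁ :=
    (intervalIntegrable_iff_integrableOn_Icc_of_le ht).2 hf
  simpa [mul_comm] using
    intervalIntegral.integral_mono_ae_restrict ht intervalIntegrable_const hfi hle

theorem le_one_of_mapsTo_Icc_of_ae_le_deriv {σ σ' : ℝ → ℝ} {t₀ a b : ℝ} (ha : 0 < a)
    (hσ : MapsTo σ (Icc t₀ (t₀ + a)) (Icc t₀ (t₀ + a)))
    (hσ' : IntegrableOn σ' (Icc t₀ (t₀ + a)))
    (hac : ∀ t ∈ Icc t₀ (t₀ + a), σ t = σ t₀ + ∫ s in t₀..t, σ' s)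
    (hb : ∀ᵐ s, s ∈ Icc t₀ (t₀ + a) → b ≤ σ' s) :
    b ≤ 1 := by
  have hI : t₀ ≤ t₀ + a := by linarith
  have hlow := mul_sub_le_intervalIntegral_of_ae_le hI hσ' hb
  have hright := hσ (right_mem_Icc.2 hI)
  have hleft := hσ (left_mem_Icc.2 hI)
  rw [hac _ (right_mem_Icc.2 hI)] at hright
  rw [add_sub_cancel_left] at hlow
  have : b * a ≤ 1 * a := by linarith [hright.2, hleft.1]
  exact le_of_mul_le_mul_right this ha

theorem continuousOn_intervalIntegral_comp_sub_apply {E F : Type*}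
    [NormedAddCommGroup E] [NormedSpace ℝ E] [NormedAddCommGroup F] [NormedSpace ℝ F]
    {K : ℝ → E →L[ℝ] F} {h : ℝ → E} {t₀ a : ℝ} (ha : 0 ≤ a)
    (hK : ContinuousOn K (Icc 0 a)) (hh : ContinuousOn h (Icc t₀ (t₀ + a))) :
    ContinuousOn (fun t => ∫ s in t₀..t, K (t - s) (h s)) (Icc t₀ (t₀ + a)) := by
  obtain ⟨K', hK'c, hK'⟩ := hK.exists_continuous_eqOn_Icc ha
  obtain ⟨h', hh'c, hh'⟩ := hh.exists_continuous_eqOn_Icc (by linarith : t₀ ≤ t₀ + a)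
  have hcont : Continuous fun t => ∫ s in t₀..t, K' (t - s) (h' s) :=
    intervalIntegral.continuous_parametric_intervalIntegral_of_continuous
      (f := fun t s => K' (t - s) (h' s)) (by fun_prop) continuous_id
  refine hcont.continuousOn.congr fun t ht => intervalIntegral.integral_congr fun s hs => ?_
  rw [uIcc_of_le ht.1] at hs
  rw [hK' ⟨by linarith [hs.2], by linarith [hs.1, ht.2]⟩, hh' ⟨hs.1, hs.2.trans ht.2⟩]

theorem norm_apply_add_intervalIntegral_comp_sub_apply_le {E F : Type*}
    [NormedAddCommGroup E] [NormedSpace ℝ E] [NormedAddCommGroup F] [NormedSpace ℝ F]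
    {S : E →L[ℝ] F} {K : ℝ → E →L[ℝ] F} {h : ℝ → E} {t₀ a t M C : ℝ}
    (ht : t ∈ Icc t₀ (t₀ + a)) (hS : ‖S‖ ≤ M) (hK : ∀ u ∈ Icc 0 a, ‖K u‖ ≤ M)
    (hh : ∀ s ∈ Icc t₀ (t₀ + a), ‖h s‖ ≤ C) (x : E) :
    ‖S x + ∫ s in t₀..t, K (t - s) (h s)‖ ≤ M * (‖x‖ + a * C) := by
  have hM : 0 ≤ M := (norm_nonneg _).trans hS
  have hC : 0 ≤ C := (norm_nonneg _).trans (hh t₀ ⟨le_rfl, ht.1.trans ht.2⟩)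
  have hintegrand : ∀ s ∈ uIoc t₀ t, ‖K (t - s) (h s)‖ ≤ M * C := by
    intro s hs
    rw [uIoc_of_le ht.1] at hs
    calc ‖K (t - s) (h s)‖ ≤ ‖K (t - s)‖ * ‖h s‖ := (K (t - s)).le_opNorm _
      _ ≤ M * C := mul_le_mul (hK _ ⟨by linarith [hs.2], by linarith [hs.1, ht.2]⟩)
          (hh s ⟨hs.1.le, hs.2.trans ht.2⟩) (norm_nonneg _) hM
  have hlen : |t - t₀| ≤ a := by
    rw [abs_of_nonneg (by linarith [ht.1])]; linarith [ht.2]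
  calc ‖S x + ∫ s in t₀..t, K (t - s) (h s)‖
      ≤ ‖S x‖ + ‖∫ s in t₀..t, K (t - s) (h s)‖ := norm_add_le _ _
    _ ≤ M * ‖x‖ + M * C * |t - t₀| := add_le_add
        ((S.le_opNorm x).trans (by gcongr))
        (intervalIntegral.norm_integral_le_of_norm_le_const hintegrand)
    _ ≤ M * ‖x‖ + M * C * a := by gcongr
    _ = M * (‖x‖ + a * C) := by ring

theorem IsCompact.le_iSup_of_continuousOn {α : Type*} [TopologicalSpace α] {s : Set α}
    {f : α → ℝ} (hs : IsCompact s) (hf : ContinuousOn f s) {x : α} (hx : x ∈ s) :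
    f x ≤ ⨆ y : s, f y :=
  le_ciSup (f := fun y : s => f y) (by simpa [image_eq_range] using hs.bddAbove_image hf)
    ⟨x, hx⟩

theorem bddAbove_norm_image_of_le_mul_iSup_norm_sub {α E : Type*} [NormedAddCommGroup E]
    {I : Set α} {Ω : Set (α → E)} {g : (α → E) → E} {R lam : ℝ} (hR : 0 ≤ R) (h0 : 0 ∈ Ω)
    (hΩ : ∀ μ ∈ Ω, ∀ t ∈ I, ‖μ t‖ ≤ R)
    (hg : ∀ μ₁ μ₂, μ₁ ∈ Ω → μ₂ ∈ Ω → ‖g μ₁ - g μ₂‖ ≤ lam * ⨆ t : I, ‖μ₁ t - μ₂ t‖) :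
    BddAbove ((fun μ => ‖g μ‖) '' Ω) := by
  refine ⟨‖g 0‖ + |lam| * R, ?_⟩
  rintro _ ⟨μ, hμ, rfl⟩
  have hsup : ⨆ t : I, ‖μ t - (0 : α → E) t‖ ≤ R :=
    Real.iSup_le (fun t => by simpa using hΩ μ hμ t t.2) hR
  have hsup₀ : 0 ≤ ⨆ t : I, ‖μ t - (0 : α → E) t‖ := Real.iSup_nonneg fun _ => norm_nonneg _
  calc ‖g μ‖ ≤ ‖g 0‖ + ‖g μ - g 0‖ := norm_le_insert' _ _
    _ ≤ ‖g 0‖ + lam * ⨆ t : I, ‖μ t - (0 : α → E) t‖ := by gcongr; exact hg μ 0 hμ h0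
    _ ≤ ‖g 0‖ + |lam| * R := by
        nlinarith [mul_le_mul_of_nonneg_right (le_abs_self lam) hsup₀, abs_nonneg lam]

theorem F_maps_Omega_into_Omega_general
    {Λ : Type*} [NormedAddCommGroup Λ] [NormedSpace ℝ Λ]
    (t₀ a : ℝ) (ha : 0 < a)
    (S K : ℝ → Λ →L[ℝ] Λ)
    (hS : ContinuousOn S (Set.Icc 0 a)) (hK : ContinuousOn K (Set.Icc 0 a))
    (ζ₁ : ℝ) (hζ₁ : ζ₁ = ⨆ t : Set.Icc (0 : ℝ) a, max ‖S t.1‖ ‖K t.1‖)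
    (R : ℝ) (hR : 0 < R)
    (b : ℝ) (hb : 0 < b)
    (σ σ' : ℝ → ℝ)
    (hσmaps : ∀ t ∈ Set.Icc t₀ (t₀ + a), σ t ∈ Set.Icc t₀ (t₀ + a))
    (hσ'int : IntegrableOn σ' (Set.Icc t₀ (t₀ + a)))
    (hσac : ∀ t ∈ Set.Icc t₀ (t₀ + a), σ t = σ t₀ + ∫ s in t₀..t, σ' s)
    (hσ'b : ∀ᵐ s, s ∈ Set.Icc t₀ (t₀ + a) → b ≤ σ' s)
    (δ : ℝ) (hδ : 0 < δ)
    (φ : ℝ → Λ → Λ)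
    (hφcont : ContinuousOn (fun p : ℝ × Λ => φ p.1 p.2)
      (Set.Icc t₀ (t₀ + a) ×ˢ (Set.univ : Set Λ)))
    (hφlip : ∀ s ∈ Set.Icc t₀ (t₀ + a), ∀ x y : Λ, ‖x‖ ≤ R → ‖y‖ ≤ R →
      ‖φ s x - φ s y‖ ≤ δ * ‖x - y‖)
    (ζ₂ : ℝ) (hζ₂ : ζ₂ = ⨆ s : Set.Icc t₀ (t₀ + a), ‖φ s.1 0‖)
    (g : (ℝ → Λ) → Λ) (lam : ℝ)
    (hg : ∀ μ₁ μ₂ : ℝ → Λ,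
      (ContinuousOn μ₁ (Set.Icc t₀ (t₀ + a)) ∧ ∀ t ∈ Set.Icc t₀ (t₀ + a), ‖μ₁ t‖ ≤ R) →
      (ContinuousOn μ₂ (Set.Icc t₀ (t₀ + a)) ∧ ∀ t ∈ Set.Icc t₀ (t₀ + a), ‖μ₂ t‖ ≤ R) →
      ‖g μ₁ - g μ₂‖ ≤ lam * ⨆ t : Set.Icc t₀ (t₀ + a), ‖μ₁ t.1 - μ₂ t.1‖)
    (ζ₃ : ℝ)
    (hζ₃ : ζ₃ = sSup ((fun μ : ℝ → Λ => ‖g μ‖) ''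
      {μ : ℝ → Λ | ContinuousOn μ (Set.Icc t₀ (t₀ + a)) ∧
        ∀ t ∈ Set.Icc t₀ (t₀ + a), ‖μ t‖ ≤ R}))
    (ξ₀ : Λ)
    (F : (ℝ → Λ) → ℝ → Λ)
    (hF : ∀ μ t, F μ t = S (t - t₀) ξ₀ - S (t - t₀) (g μ)
      + ∫ s in t₀..t, K (t - s) (φ s (μ (σ s))))
    (hmain : ζ₁ * (‖ξ₀‖ + ζ₃ + a * δ * R / b + a * ζ₂) ≤ R) :
    ∀ μ : ℝ → Λ,
      (ContinuousOn μ (Set.Icc t₀ (t₀ + a)) ∧ ∀ t ∈ Set.Icc t₀ (t₀ + a), ‖μ t‖ ≤ R) →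
      ContinuousOn (F μ) (Set.Icc t₀ (t₀ + a)) ∧
        ∀ t ∈ Set.Icc t₀ (t₀ + a), ‖F μ t‖ ≤ R := by
  intro μ hμ
  have hI : t₀ ≤ t₀ + a := by linarith
  have hSK : ∀ u ∈ Icc 0 a, ‖S u‖ ≤ ζ₁ ∧ ‖K u‖ ≤ ζ₁ := fun u hu =>
    max_le_iff.1 (hζ₁ ▸ isCompact_Icc.le_iSup_of_continuousOn (hS.norm.sup hK.norm) hu)
  have hφ0 : ∀ s ∈ Icc t₀ (t₀ + a), ‖φ s 0‖ ≤ ζ₂ := fun s hs =>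
    hζ₂ ▸ isCompact_Icc.le_iSup_of_continuousOn
      (hφcont.comp (continuousOn_id.prodMk continuousOn_const) fun s hs => ⟨hs, mem_univ _⟩).norm hs
  have hgμ : ‖g μ‖ ≤ ζ₃ := hζ₃ ▸ le_csSup (bddAbove_norm_image_of_le_mul_iSup_norm_sub hR.le
    ⟨continuousOn_const, fun _ _ => by simpa using hR.le⟩ (fun _ hν => hν.2) hg) ⟨μ, hμ, rfl⟩
  have hintegrand : ∀ s ∈ Icc t₀ (t₀ + a), ‖φ s (μ (σ s))‖ ≤ δ * R + ζ₂ := fun s hs => by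
    have hlip := hφlip s hs _ 0 (hμ.2 _ (hσmaps s hs)) (by simpa using hR.le)
    rw [sub_zero] at hlip
    linarith [norm_le_insert' (φ s (μ (σ s))) (φ s 0), hφ0 s hs,
      mul_le_mul_of_nonneg_left (hμ.2 _ (hσmaps s hs)) hδ.le]
  have hb1 := le_one_of_mapsTo_Icc_of_ae_le_deriv ha hσmaps hσ'int hσac hσ'b
  rw [show F μ = fun t => S (t - t₀) (ξ₀ - g μ) + ∫ s in t₀..t, K (t - s) (φ s (μ (σ s))) from
    funext fun t => by rw [hF, map_sub]]
  refine ⟨?_, fun t ht => ?_⟩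
  · have hσc := ContinuousOn.of_eq_add_intervalIntegral hI hσ'int hσac
    exact ((hS.comp (by fun_prop) fun t ht => ⟨by linarith [ht.1], by linarith [ht.2]⟩).clm_apply
      continuousOn_const).add (continuousOn_intervalIntegral_comp_sub_apply ha.le hK
        (hφcont.comp (continuousOn_id.prodMk (hμ.1.comp hσc hσmaps))
          fun s hs => ⟨hs, mem_univ _⟩))
  · have hSt := (hSK (t - t₀) ⟨by linarith [ht.1], by linarith [ht.2]⟩).1
    have hζ₁0 : 0 ≤ ζ₁ := (norm_nonneg _).trans hSt
    calc _ ≤ ζ₁ * (‖ξ₀ - g μ‖ + a * (δ * R + ζ₂)) :=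
          norm_apply_add_intervalIntegral_comp_sub_apply_le ht hSt (fun u hu => (hSK u hu).2)
            hintegrand _
      _ ≤ ζ₁ * (‖ξ₀‖ + ζ₃ + a * δ * R / b + a * ζ₂) := by
          refine mul_le_mul_of_nonneg_left ?_ hζ₁0
          linarith [norm_sub_le ξ₀ (g μ), le_div_self (by positivity : 0 ≤ a * δ * R) hb hb1]
      _ ≤ R := hmain

/-- Invariance step in the proof of Theorem 1: under condition
`ζ₁(‖ξ₀‖ + ζ₃ + aδR/b + aζ₂) ≤ R`, the solution operator `F` maps
`Ω = C(I, B_R)` into itself. -/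
theorem F_maps_Omega_into_Omega
    {Λ : Type*} [NormedAddCommGroup Λ] [NormedSpace ℝ Λ] [CompleteSpace Λ]
    (t₀ a : ℝ) (ht₀ : 0 ≤ t₀) (ha : 0 < a)
    (S K : ℝ → Λ →L[ℝ] Λ)
    (hS : ContinuousOn S (Set.Icc 0 a)) (hK : ContinuousOn K (Set.Icc 0 a))
    (ζ₁ : ℝ) (hζ₁ : ζ₁ = ⨆ t : Set.Icc (0 : ℝ) a, max ‖S t.1‖ ‖K t.1‖)
    (R : ℝ) (hR : 0 < R)
    (b : ℝ) (hb : 0 < b)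
    (σ σ' : ℝ → ℝ)
    (hσmaps : ∀ t ∈ Set.Icc t₀ (t₀ + a), σ t ∈ Set.Icc t₀ (t₀ + a))
    (hσ'int : IntegrableOn σ' (Set.Icc t₀ (t₀ + a)))
    (hσac : ∀ t ∈ Set.Icc t₀ (t₀ + a), σ t = σ t₀ + ∫ s in t₀..t, σ' s)
    (hσ'b : ∀ᵐ s, s ∈ Set.Icc t₀ (t₀ + a) → b ≤ σ' s)
    (δ : ℝ) (hδ : 0 < δ)
    (φ : ℝ → Λ → Λ)
    (hφcont : ContinuousOn (fun p : ℝ × Λ => φ p.1 p.2)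
      (Set.Icc t₀ (t₀ + a) ×ˢ (Set.univ : Set Λ)))
    (hφlip : ∀ s ∈ Set.Icc t₀ (t₀ + a), ∀ x y : Λ, ‖x‖ ≤ R → ‖y‖ ≤ R →
      ‖φ s x - φ s y‖ ≤ δ * ‖x - y‖)
    (ζ₂ : ℝ) (hζ₂ : ζ₂ = ⨆ s : Set.Icc t₀ (t₀ + a), ‖φ s.1 0‖)
    (g : (ℝ → Λ) → Λ) (lam : ℝ)
    (hg : ∀ μ₁ μ₂ : ℝ → Λ,
      (ContinuousOn μ₁ (Set.Icc t₀ (t₀ + a)) ∧ ∀ t ∈ Set.Icc t₀ (t₀ + a), ‖μ₁ t‖ ≤ R) →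
      (ContinuousOn μ₂ (Set.Icc t₀ (t₀ + a)) ∧ ∀ t ∈ Set.Icc t₀ (t₀ + a), ‖μ₂ t‖ ≤ R) →
      ‖g μ₁ - g μ₂‖ ≤ lam * ⨆ t : Set.Icc t₀ (t₀ + a), ‖μ₁ t.1 - μ₂ t.1‖)
    (ζ₃ : ℝ)
    (hζ₃ : ζ₃ = sSup ((fun μ : ℝ → Λ => ‖g μ‖) ''
      {μ : ℝ → Λ | ContinuousOn μ (Set.Icc t₀ (t₀ + a)) ∧
        ∀ t ∈ Set.Icc t₀ (t₀ + a), ‖μ t‖ ≤ R}))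
    (ξ₀ : Λ)
    (F : (ℝ → Λ) → ℝ → Λ)
    (hF : ∀ μ t, F μ t = S (t - t₀) ξ₀ - S (t - t₀) (g μ)
      + ∫ s in t₀..t, K (t - s) (φ s (μ (σ s))))
    (hmain : ζ₁ * (‖ξ₀‖ + ζ₃ + a * δ * R / b + a * ζ₂) ≤ R) :
    ∀ μ : ℝ → Λ,
      (ContinuousOn μ (Set.Icc t₀ (t₀ + a)) ∧ ∀ t ∈ Set.Icc t₀ (t₀ + a), ‖μ t‖ ≤ R) →
      ContinuousOn (F μ) (Set.Icc t₀ (t₀ + a)) ∧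
        ∀ t ∈ Set.Icc t₀ (t₀ + a), ‖F μ t‖ ≤ R :=
  F_maps_Omega_into_Omega_general t₀ a ha S K hS hK ζ₁ hζ₁ R hR b hb σ σ' hσmaps hσ'int hσac hσ'b δ
    hδ φ hφcont hφlip ζ₂ hζ₂ g lam hg ζ₃ hζ₃ ξ₀ F hF hmain
end

section
/- Let Λ be a Banach space, t₀ ≥ 0, a > 0 and I = [t₀, t₀ + a]. Let S, K : [0, a] → L(Λ) be operator-norm continuous families of bounded linear operators on Λ and set ζ₁ := sup_{t ∈ [0,a]} max(‖S(t)‖, ‖K(t)‖). Let R > 0, B_R := {x ∈ Λ : ‖x‖ ≤ R}, and Ω := C(I, B_R) with the sup norm. Let σ : I → I be absolutely continuous with σ′(s) ≥ b > 0 for a.e. s ∈ I. Let φ : I × Λ → Λ be continuous with ‖φ(s, x) − φ(s, y)‖ ≤ δ‖x − y‖ for all s ∈ I and x, y ∈ B_R. Let g : Ω → Λ satisfy ‖g(μ₁) − g(μ₂)‖ ≤ λ‖μ₁ − μ₂‖_∞ for all μ₁, μ₂ ∈ Ω. Let ξ₀ ∈ Λ and define (Fμ)(t) := S(t − t₀)ξ₀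 − S(t − t₀)g(μ) + ∫_{t₀}^{t} K(t − s) φ(s, μ(σ(s))) ds. Then for all μ₁, μ₂ ∈ Ω, ‖Fμ₁ − Fμ₂‖_∞ ≤ (ζ₁λ + ζ₁δa/b) ‖μ₁ − μ₂‖_∞. -/
open MeasureTheory Set

/-!
The difference `Fμ₁(t) − Fμ₂(t)` splits into `S(t − t₀)(gμ₂ − gμ₁)`, of norm at most `ζ₁λ‖μ₁ − μ₂‖_∞`,
and `∫_{t₀}^{t} K(t − s)(φ(s, μ₁(σ s)) − φ(s, μ₂(σ s))) ds`, of norm at most `ζ₁δ(t − t₀)‖μ₁ − μ₂‖_∞`.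
No change of variables through `σ` is needed: `σ` maps `I` into itself with `σ' ≥ b`, so
`b a ≤ σ(t₀ + a) − σ(t₀) ≤ a`, i.e. `b ≤ 1`, and hence `t − t₀ ≤ a ≤ a / b`.
-/

theorem IsCompact.le_ciSup_of_continuousOn {X : Type*} [TopologicalSpace X] {s : Set X}
    (hs : IsCompact s) {f : X → ℝ} (hf : ContinuousOn f s) {x : X} (hx : x ∈ s) :
    f x ≤ ⨆ y : s, f y :=
  le_ciSup (by simpa only [image_eq_range] using hs.bddAbove_image hf) (⟨x, hx⟩ : s)

theorem mul_sub_le_intervalIntegral_of_ae_le_s1 {f : ℝ → ℝ} {x y c : ℝ} (hxy : x ≤ y)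
    (hf : IntegrableOn f (Icc x y)) (hc : ∀ᵐ s, s ∈ Icc x y → c ≤ f s) :
    c * (y - x) ≤ ∫ s in x..y, f s := by
  have := intervalIntegral.integral_mono_ae_restrict hxy intervalIntegrable_const
    ((intervalIntegrable_iff_integrableOn_Icc_of_le hxy).2 hf)
    ((ae_restrict_iff' measurableSet_Icc).2 hc)
  simpa only [intervalIntegral.integral_const, smul_eq_mul, mul_comm] using this

theorem le_one_of_mapsTo_Icc_of_le_deriv {σ σ' : ℝ → ℝ} {x y b : ℝ} (hxy : x < y)
    (hmaps : MapsTo σ (Icc x y) (Icc x y)) (hσ' : IntegrableOn σ' (Icc x y))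
    (hσ : σ y = σ x + ∫ s in x..y, σ' s) (hb : ∀ᵐ s, s ∈ Icc x y → b ≤ σ' s) : b ≤ 1 := by
  have hinc := mul_sub_le_intervalIntegral_of_ae_le_s1 hxy.le hσ' hb
  have hx := hmaps (left_mem_Icc.2 hxy.le)
  have hy := hmaps (right_mem_Icc.2 hxy.le)
  have : b * (y - x) ≤ 1 * (y - x) := by linarith [hx.1, hy.2]
  exact le_of_mul_le_mul_right this (sub_pos.2 hxy)

theorem continuousOn_of_eq_add_intervalIntegral {σ σ' : ℝ → ℝ} {x y : ℝ}
    (hσ' : IntegrableOn σ' (Icc x y)) (hσ : ∀ t ∈ Icc x y, σ t = σ x + ∫ s in x..t, σ' s) :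
    ContinuousOn σ (Icc x y) := by
  rcases le_total x y with hxy | hyx
  · rw [← uIcc_of_le hxy] at hσ' ⊢
    exact (continuousOn_const.add (intervalIntegral.continuousOn_primitive_interval hσ')).congr
      (by rwa [uIcc_of_le hxy])
  · exact (subsingleton_Icc_of_ge hyx).continuousOn σ

theorem ContinuousOn.comp_apply_comp {X E F : Type*} [TopologicalSpace X] [TopologicalSpace E]
    [TopologicalSpace F] {φ : X → E → F} {μ : X → E} {σ : X → X} {I J : Set X}
    (hφ : ContinuousOn (fun p : X × E => φ p.1 p.2) (I ×ˢ univ))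
    (hμ : ContinuousOn μ I) (hσ : ContinuousOn σ J) (hJ : J ⊆ I) (hmaps : MapsTo σ J I) :
    ContinuousOn (fun s => φ s (μ (σ s))) J :=
  hφ.comp (continuousOn_id.prodMk (hμ.comp hσ hmaps)) fun _ hs => ⟨hJ hs, mem_univ _⟩

section Volterra

variable {E F : Type*} [NormedAddCommGroup E] [NormedSpace ℝ E] [NormedAddCommGroup F]
  [NormedSpace ℝ F]

theorem norm_intervalIntegral_clm_apply_sub_le {B : ℝ → E →L[ℝ] F} {u v : ℝ → E}
    {x y C D : ℝ} (hxy : x ≤ y) (hB : ContinuousOn B (Icc x y))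
    (hu : ContinuousOn u (Icc x y)) (hv : ContinuousOn v (Icc x y))
    (hBC : ∀ s ∈ Icc x y, ‖B s‖ ≤ C) (huv : ∀ s ∈ Icc x y, ‖u s - v s‖ ≤ D) :
    ‖(∫ s in x..y, B s (u s)) - ∫ s in x..y, B s (v s)‖ ≤ C * D * (y - x) := by
  rw [← intervalIntegral.integral_sub ((hB.clm_apply hu).intervalIntegrable_of_Icc hxy)
    ((hB.clm_apply hv).intervalIntegrable_of_Icc hxy)]
  have hbound : ∀ s ∈ uIoc x y, ‖B s (u s) - B s (v s)‖ ≤ C * D := by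
    rw [uIoc_of_le hxy]
    intro s hs
    rw [← map_sub]
    exact (B s).le_of_opNorm_le_of_le (hBC s (Ioc_subset_Icc_self hs))
      (huv s (Ioc_subset_Icc_self hs))
  simpa only [abs_of_nonneg (sub_nonneg.2 hxy)]
    using intervalIntegral.norm_integral_le_of_norm_le_const hbound

theorem norm_sub_add_intervalIntegral_sub_le {A : E →L[ℝ] F} {B : ℝ → E →L[ℝ] F}
    {ξ e₁ e₂ : E} {u₁ u₂ : ℝ → E} {x y C L D : ℝ} (hxy : x ≤ y) (hB : ContinuousOn B (Icc x y))
    (hu₁ : ContinuousOn u₁ (Icc x y)) (hu₂ : ContinuousOn u₂ (Icc x y)) (hAC : ‖A‖ ≤ C)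
    (hBC : ∀ s ∈ Icc x y, ‖B s‖ ≤ C) (he : ‖e₁ - e₂‖ ≤ L)
    (hu : ∀ s ∈ Icc x y, ‖u₁ s - u₂ s‖ ≤ D) :
    ‖(A ξ - A e₁ + ∫ s in x..y, B s (u₁ s)) - (A ξ - A e₂ + ∫ s in x..y, B s (u₂ s))‖ ≤
      C * L + C * D * (y - x) := by
  have hsplit : (A ξ - A e₁ + ∫ s in x..y, B s (u₁ s)) - (A ξ - A e₂ + ∫ s in x..y, B s (u₂ s))
      = A (e₂ - e₁) + ((∫ s in x..y, B s (u₁ s)) - ∫ s in x..y, B s (u₂ s)) := by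
    rw [map_sub]
    abel
  rw [hsplit]
  exact (norm_add_le _ _).trans <| add_le_add
    (A.le_of_opNorm_le_of_le hAC (norm_sub_rev e₂ e₁ ▸ he))
    (norm_intervalIntegral_clm_apply_sub_le hxy hB hu₁ hu₂ hBC hu)

end Volterra

theorem F_contraction_estimate_general
    {Λ : Type*} [NormedAddCommGroup Λ] [NormedSpace ℝ Λ]
    (t₀ a : ℝ) (ha : 0 < a)
    (S K : ℝ → Λ →L[ℝ] Λ)
    (hS : ContinuousOn S (Set.Icc 0 a)) (hK : ContinuousOn K (Set.Icc 0 a))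
    (ζ₁ : ℝ) (hζ₁ : ζ₁ = ⨆ t : Set.Icc (0 : ℝ) a, max ‖S t.1‖ ‖K t.1‖)
    (R : ℝ)
    (b : ℝ) (hb : 0 < b)
    (σ σ' : ℝ → ℝ)
    (hσmaps : ∀ t ∈ Set.Icc t₀ (t₀ + a), σ t ∈ Set.Icc t₀ (t₀ + a))
    (hσ'int : IntegrableOn σ' (Set.Icc t₀ (t₀ + a)))
    (hσac : ∀ t ∈ Set.Icc t₀ (t₀ + a), σ t = σ t₀ + ∫ s in t₀..t, σ' s)
    (hσ'b : ∀ᵐ s, s ∈ Set.Icc t₀ (t₀ + a) → b ≤ σ' s)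
    (δ : ℝ) (hδ : 0 < δ)
    (φ : ℝ → Λ → Λ)
    (hφcont : ContinuousOn (fun p : ℝ × Λ => φ p.1 p.2)
      (Set.Icc t₀ (t₀ + a) ×ˢ (Set.univ : Set Λ)))
    (hφlip : ∀ s ∈ Set.Icc t₀ (t₀ + a), ∀ x y : Λ, ‖x‖ ≤ R → ‖y‖ ≤ R →
      ‖φ s x - φ s y‖ ≤ δ * ‖x - y‖)
    (g : (ℝ → Λ) → Λ) (lam : ℝ)
    (hg : ∀ μ₁ μ₂ : ℝ → Λ,
      (ContinuousOn μ₁ (Set.Icc t₀ (t₀ + a)) ∧ ∀ t ∈ Set.Icc t₀ (t₀ + a), ‖μ₁ t‖ ≤ R) →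
      (ContinuousOn μ₂ (Set.Icc t₀ (t₀ + a)) ∧ ∀ t ∈ Set.Icc t₀ (t₀ + a), ‖μ₂ t‖ ≤ R) →
      ‖g μ₁ - g μ₂‖ ≤ lam * ⨆ t : Set.Icc t₀ (t₀ + a), ‖μ₁ t.1 - μ₂ t.1‖)
    (ξ₀ : Λ)
    (F : (ℝ → Λ) → ℝ → Λ)
    (hF : ∀ μ t, F μ t = S (t - t₀) ξ₀ - S (t - t₀) (g μ)
      + ∫ s in t₀..t, K (t - s) (φ s (μ (σ s)))) :
    ∀ μ₁ μ₂ : ℝ → Λ,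
      (ContinuousOn μ₁ (Set.Icc t₀ (t₀ + a)) ∧ ∀ t ∈ Set.Icc t₀ (t₀ + a), ‖μ₁ t‖ ≤ R) →
      (ContinuousOn μ₂ (Set.Icc t₀ (t₀ + a)) ∧ ∀ t ∈ Set.Icc t₀ (t₀ + a), ‖μ₂ t‖ ≤ R) →
      (⨆ t : Set.Icc t₀ (t₀ + a), ‖F μ₁ t.1 - F μ₂ t.1‖) ≤
        (ζ₁ * lam + ζ₁ * δ * a / b) * ⨆ t : Set.Icc t₀ (t₀ + a), ‖μ₁ t.1 - μ₂ t.1‖ := by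
  intro μ₁ μ₂ hμ₁ hμ₂
  set I := Icc t₀ (t₀ + a)
  set M := ⨆ t : I, ‖μ₁ t.1 - μ₂ t.1‖
  have hb1 : b ≤ 1 := le_one_of_mapsTo_Icc_of_le_deriv (by linarith) hσmaps hσ'int
    (hσac _ (right_mem_Icc.2 (by linarith))) hσ'b
  have hσ : ContinuousOn σ I := continuousOn_of_eq_add_intervalIntegral hσ'int hσac
  have hSK : ∀ r ∈ Icc 0 a, ‖S r‖ ≤ ζ₁ ∧ ‖K r‖ ≤ ζ₁ := fun r hr =>
    max_le_iff.1 (hζ₁ ▸ isCompact_Icc.le_ciSup_of_continuousOn (hS.norm.sup hK.norm) hr)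
  have hM : ∀ t ∈ I, ‖μ₁ t - μ₂ t‖ ≤ M := fun t ht =>
    isCompact_Icc.le_ciSup_of_continuousOn (hμ₁.1.sub hμ₂.1).norm ht
  have hM0 : 0 ≤ M := (norm_nonneg _).trans (hM t₀ (left_mem_Icc.2 (by linarith)))
  have hζ0 : 0 ≤ ζ₁ := (norm_nonneg _).trans (hSK 0 (left_mem_Icc.2 ha.le)).1
  have hφM : ∀ s ∈ I, ‖φ s (μ₁ (σ s)) - φ s (μ₂ (σ s))‖ ≤ δ * M := fun s hs =>
    (hφlip s hs _ _ (hμ₁.2 _ (hσmaps s hs)) (hμ₂.2 _ (hσmaps s hs))).trans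
      (mul_le_mul_of_nonneg_left (hM _ (hσmaps s hs)) hδ.le)
  have : Nonempty I := (nonempty_Icc.2 (by linarith)).to_subtype
  refine ciSup_le fun ⟨t, ht⟩ => ?_
  have hIt : Icc t₀ t ⊆ I := Icc_subset_Icc_right ht.2
  have hsub : MapsTo (t - ·) (Icc t₀ t) (Icc 0 a) := fun s hs =>
    ⟨by linarith [hs.2], by linarith [hs.1, ht.2]⟩
  have hφμ : ∀ μ, ContinuousOn μ I → ContinuousOn (fun s => φ s (μ (σ s))) (Icc t₀ t) :=
    fun μ hμ => hφcont.comp_apply_comp hμ (hσ.mono hIt) hIt fun s hs => hσmaps s (hIt hs)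
  have hta : t - t₀ ≤ a / b := by linarith [ht.2, le_div_self ha.le hb hb1]
  rw [hF, hF]
  calc _ ≤ ζ₁ * (lam * M) + ζ₁ * (δ * M) * (t - t₀) :=
        norm_sub_add_intervalIntegral_sub_le ht.1 (hK.comp (by fun_prop) hsub)
          (hφμ μ₁ hμ₁.1) (hφμ μ₂ hμ₂.1) (hSK _ (hsub (left_mem_Icc.2 ht.1))).1
          (fun s hs => (hSK _ (hsub hs)).2) (hg μ₁ μ₂ hμ₁ hμ₂) fun s hs => hφM s (hIt hs)
    _ ≤ ζ₁ * (lam * M) + ζ₁ * (δ * M) * (a / b) := by gcongr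
    _ = (ζ₁ * lam + ζ₁ * δ * a / b) * M := by ring

/-- Contraction estimate in the proof of Theorem 1: for all `μ₁, μ₂ ∈ Ω = C(I, B_R)`,
`‖Fμ₁ − Fμ₂‖_∞ ≤ (ζ₁λ + ζ₁δa/b) ‖μ₁ − μ₂‖_∞`. -/
theorem F_contraction_estimate
    {Λ : Type*} [NormedAddCommGroup Λ] [NormedSpace ℝ Λ] [CompleteSpace Λ]
    (t₀ a : ℝ) (ht₀ : 0 ≤ t₀) (ha : 0 < a)
    (S K : ℝ → Λ →L[ℝ] Λ)
    (hS : ContinuousOn S (Set.Icc 0 a)) (hK : ContinuousOn K (Set.Icc 0 a))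
    (ζ₁ : ℝ) (hζ₁ : ζ₁ = ⨆ t : Set.Icc (0 : ℝ) a, max ‖S t.1‖ ‖K t.1‖)
    (R : ℝ) (hR : 0 < R)
    (b : ℝ) (hb : 0 < b)
    (σ σ' : ℝ → ℝ)
    (hσmaps : ∀ t ∈ Set.Icc t₀ (t₀ + a), σ t ∈ Set.Icc t₀ (t₀ + a))
    (hσ'int : IntegrableOn σ' (Set.Icc t₀ (t₀ + a)))
    (hσac : ∀ t ∈ Set.Icc t₀ (t₀ + a), σ t = σ t₀ + ∫ s in t₀..t, σ' s)
    (hσ'b : ∀ᵐ s, s ∈ Set.Icc t₀ (t₀ + a) → b ≤ σ' s)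
    (δ : ℝ) (hδ : 0 < δ)
    (φ : ℝ → Λ → Λ)
    (hφcont : ContinuousOn (fun p : ℝ × Λ => φ p.1 p.2)
      (Set.Icc t₀ (t₀ + a) ×ˢ (Set.univ : Set Λ)))
    (hφlip : ∀ s ∈ Set.Icc t₀ (t₀ + a), ∀ x y : Λ, ‖x‖ ≤ R → ‖y‖ ≤ R →
      ‖φ s x - φ s y‖ ≤ δ * ‖x - y‖)
    (g : (ℝ → Λ) → Λ) (lam : ℝ)
    (hg : ∀ μ₁ μ₂ : ℝ → Λ,
      (ContinuousOn μ₁ (Set.Icc t₀ (t₀ + a)) ∧ ∀ t ∈ Set.Icc t₀ (t₀ + a), ‖μ₁ t‖ ≤ R) →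
      (ContinuousOn μ₂ (Set.Icc t₀ (t₀ + a)) ∧ ∀ t ∈ Set.Icc t₀ (t₀ + a), ‖μ₂ t‖ ≤ R) →
      ‖g μ₁ - g μ₂‖ ≤ lam * ⨆ t : Set.Icc t₀ (t₀ + a), ‖μ₁ t.1 - μ₂ t.1‖)
    (ξ₀ : Λ)
    (F : (ℝ → Λ) → ℝ → Λ)
    (hF : ∀ μ t, F μ t = S (t - t₀) ξ₀ - S (t - t₀) (g μ)
      + ∫ s in t₀..t, K (t - s) (φ s (μ (σ s)))) :
    ∀ μ₁ μ₂ : ℝ → Λ,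
      (ContinuousOn μ₁ (Set.Icc t₀ (t₀ + a)) ∧ ∀ t ∈ Set.Icc t₀ (t₀ + a), ‖μ₁ t‖ ≤ R) →
      (ContinuousOn μ₂ (Set.Icc t₀ (t₀ + a)) ∧ ∀ t ∈ Set.Icc t₀ (t₀ + a), ‖μ₂ t‖ ≤ R) →
      (⨆ t : Set.Icc t₀ (t₀ + a), ‖F μ₁ t.1 - F μ₂ t.1‖) ≤
        (ζ₁ * lam + ζ₁ * δ * a / b) * ⨆ t : Set.Icc t₀ (t₀ + a), ‖μ₁ t.1 - μ₂ t.1‖ :=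
  F_contraction_estimate_general t₀ a ha S K hS hK ζ₁ hζ₁ R b hb σ σ' hσmaps hσ'int hσac hσ'b δ hδ φ
    hφcont hφlip g lam hg ξ₀ F hF
end

section
/- Let α ∈ (0, 1), t₀ ∈ ℝ, a > 0 and I = [t₀, t₀ + a]. Define the Mittag-Leffler function E_α(z) := ∑_{k=0}^{∞} z^k / Γ(αk + 1) for z ≥ 0, where Γ is the real Gamma function. Let u : I → ℝ be continuous and nonnegative, and let θ ≥ 0 and C ≥ 0 be constants such that u(t) ≤ θ + C ∫_{t₀}^{t} (t − s)^{α−1} u(s) ds for all t ∈ I. Then u(t) ≤ θ · E_α(C Γ(α) (t − t₀)^α) for all t ∈ I. -/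
/-!
Start from a bound `M` for `u` and iterate the inequality: after `n` steps
`u ≤ θ ∑_{k<n} E_k + M E_n` with `E_k(t) = (C Γ(α) (t - t₀)^α)^k / Γ(αk + 1)`, because the Beta
integral `∫_{t₀}^t (t - s)^(α-1) (s - t₀)^(αk) ds = B(α, αk + 1) (t - t₀)^(α(k+1))` turns
`C ∫_{t₀}^t (t - s)^(α-1) E_k(s) ds` into `E_{k+1}(t)`. Wendel's inequality
`Γ(x + 1) ≤ Γ(x + α) (x + α)^(1-α)`, a consequence of the log-convexity of `Γ`, makes the ratio of
consecutive terms of the Mittag-Leffler series tend to `0`; hence the series converges and the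
remainder `M E_n` tends to `0`.
-/

open MeasureTheory Set Real Filter Topology

lemma integral_rpow_mul_sub_rpow {p q L : ℝ} (hp : 0 < p) (hq : 0 < q) (hL : 0 < L) :
    ∫ x in (0 : ℝ)..L, x ^ (p - 1) * (L - x) ^ (q - 1)
      = Gamma p * Gamma q / Gamma (p + q) * L ^ (p + q - 1) := by
  have h := Complex.betaIntegral_scaled p q hL
  rw [Complex.betaIntegral_eq_Gamma_mul_div _ _ (by simpa) (by simpa)] at h
  have hreal : ∫ x in (0 : ℝ)..L, (x : ℂ) ^ ((p : ℂ) - 1) * ((L : ℂ) - x) ^ ((q : ℂ) - 1)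
      = ((∫ x in (0 : ℝ)..L, x ^ (p - 1) * (L - x) ^ (q - 1) : ℝ) : ℂ) := by
    rw [← intervalIntegral.integral_ofReal]
    refine intervalIntegral.integral_congr fun x hx => ?_
    rw [uIcc_of_le hL.le] at hx
    push_cast [Complex.ofReal_cpow hx.1, Complex.ofReal_cpow (sub_nonneg.2 hx.2)]
    rfl
  apply Complex.ofReal_injective
  push_cast [Complex.ofReal_cpow hL.le, ← Complex.Gamma_ofReal]
  rw [← hreal, h]
  ring

lemma integral_sub_rpow_mul_sub_rpow {p c t₀ t : ℝ} (hp : 0 < p) (hc : -1 < c) (ht : t₀ < t) :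
    ∫ s in t₀..t, (t - s) ^ (p - 1) * (s - t₀) ^ c
      = Gamma p * Gamma (c + 1) / Gamma (p + c + 1) * (t - t₀) ^ (p + c) := by
  have h := integral_rpow_mul_sub_rpow (neg_lt_iff_pos_add.1 hc) hp (sub_pos.2 ht)
  rw [← sub_self t₀, ← intervalIntegral.integral_comp_sub_right] at h
  simp only [add_sub_cancel_right, sub_sub_sub_cancel_right] at h
  rw [intervalIntegral.integral_congr fun s _ => mul_comm _ _, h]
  ring_nf

lemma Gamma_add_one_le_Gamma_add_mul_rpow {α x : ℝ} (hα : α ∈ Ioo 0 1) (hx : 0 < x + α) :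
    Gamma (x + 1) ≤ Gamma (x + α) * (x + α) ^ (1 - α) := by
  have h := Gamma_mul_add_mul_le_rpow_Gamma_mul_rpow_Gamma hx (by linarith : 0 < x + α + 1)
    hα.1 (sub_pos.2 hα.2) (add_sub_cancel α 1)
  rw [Gamma_add_one hx.ne', mul_rpow (by positivity) (Gamma_pos_of_pos hx).le,
    ← mul_assoc, mul_right_comm, ← rpow_add (Gamma_pos_of_pos hx), add_sub_cancel, rpow_one] at h
  convert h using 2
  ring

lemma tendsto_Gamma_div_Gamma_add {α : ℝ} (hα : α ∈ Ioo 0 1) :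
    Tendsto (fun x => Gamma x / Gamma (x + α)) atTop (𝓝 0) := by
  have hlim : Tendsto (fun x : ℝ => 2 ^ (1 - α) * x ^ (-α)) atTop (𝓝 0) := by
    simpa using (tendsto_rpow_neg_atTop hα.1).const_mul (2 ^ (1 - α))
  refine tendsto_of_tendsto_of_tendsto_of_le_of_le' tendsto_const_nhds hlim ?_ ?_
  · filter_upwards [eventually_gt_atTop 0] with x hx
    exact div_nonneg (Gamma_pos_of_pos hx).le (Gamma_pos_of_pos (by linarith [hα.1])).le
  · filter_upwards [eventually_ge_atTop 1] with x hx
    have hx0 : 0 < x := by linarith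
    have hxα : 0 < x + α := by linarith [hα.1]
    have hwendel := Gamma_add_one_le_Gamma_add_mul_rpow hα hxα
    rw [Gamma_add_one hx0.ne'] at hwendel
    have hpow : (x + α) ^ (1 - α) ≤ 2 ^ (1 - α) * x ^ (1 - α) := by
      rw [← mul_rpow zero_le_two hx0.le]
      exact rpow_le_rpow hxα.le (by linarith [hα.2]) (sub_nonneg.2 hα.2.le)
    rw [div_le_iff₀ (Gamma_pos_of_pos hxα)]
    calc Gamma x = x⁻¹ * (x * Gamma x) := by field_simp
      _ ≤ x⁻¹ * (Gamma (x + α) * (2 ^ (1 - α) * x ^ (1 - α))) :=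
        mul_le_mul_of_nonneg_left
          (hwendel.trans (mul_le_mul_of_nonneg_left hpow (Gamma_pos_of_pos hxα).le))
          (inv_nonneg.2 hx0.le)
      _ = 2 ^ (1 - α) * x ^ (-α) * Gamma (x + α) := by
        rw [sub_eq_neg_add, rpow_add hx0, rpow_one]
        field_simp

noncomputable def mittagLefflerTerm (α z : ℝ) (k : ℕ) : ℝ := z ^ k / Gamma (α * k + 1)

lemma summable_mittagLefflerTerm {α : ℝ} (hα : α ∈ Ioo 0 1) (z : ℝ) :
    Summable (mittagLefflerTerm α z) := by
  have hratio : Tendsto (fun n : ℕ => |z| * (Gamma (α * n + 1) / Gamma (α * n + 1 + α)))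
      atTop (𝓝 0) := by
    have hlin : Tendsto (fun n : ℕ => α * n + 1) atTop atTop :=
      tendsto_atTop_add_const_right _ 1 (tendsto_natCast_atTop_atTop.const_mul_atTop hα.1)
    simpa using ((tendsto_Gamma_div_Gamma_add hα).comp hlin).const_mul |z|
  refine summable_of_ratio_norm_eventually_le one_half_lt_one ?_
  filter_upwards [hratio.eventually_le_const one_half_pos] with n hn
  have hα0 := hα.1
  have hΓ : 0 < Gamma (α * n + 1) := Gamma_pos_of_pos (by positivity)
  calc ‖mittagLefflerTerm α z (n + 1)‖
      = |z| * (Gamma (α * n + 1) / Gamma (α * n + 1 + α)) * ‖mittagLefflerTerm α z n‖ := by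
        simp only [mittagLefflerTerm, norm_div, norm_pow, Real.norm_eq_abs]
        rw [abs_of_pos hΓ, abs_of_pos (Gamma_pos_of_pos (by positivity))]
        push_cast
        field_simp
        ring_nf
    _ ≤ 1 / 2 * ‖mittagLefflerTerm α z n‖ := by gcongr

@[simp]
lemma mittagLefflerTerm_zero (α z : ℝ) : mittagLefflerTerm α z 0 = 1 := by
  simp [mittagLefflerTerm]

lemma continuous_mittagLefflerTerm_rpow {α : ℝ} (hα : 0 < α) (c t₀ : ℝ) (k : ℕ) :
    Continuous fun s => mittagLefflerTerm α (c * (s - t₀) ^ α) k := by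
  unfold mittagLefflerTerm
  fun_prop (disch := positivity)

section Kernel

variable {α t₀ t : ℝ}

lemma intervalIntegrable_sub_rpow_mul {φ : ℝ → ℝ} (hα : 0 < α) (ht : t₀ ≤ t)
    (hφ : ContinuousOn φ (Icc t₀ t)) :
    IntervalIntegrable (fun s => (t - s) ^ (α - 1) * φ s) volume t₀ t := by
  have hker := (intervalIntegral.intervalIntegrable_rpow' (a := 0) (b := t - t₀)
    (by linarith : -1 < α - 1)).comp_sub_left t
  rw [sub_sub_cancel, sub_zero] at hker
  exact hker.symm.mul_continuousOn (by rwa [uIcc_of_le ht])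

lemma integral_sub_rpow_mul_mono {φ ψ : ℝ → ℝ} (hα : 0 < α) (ht : t₀ ≤ t)
    (hφ : ContinuousOn φ (Icc t₀ t)) (hψ : ContinuousOn ψ (Icc t₀ t))
    (hle : ∀ s ∈ Icc t₀ t, φ s ≤ ψ s) :
    ∫ s in t₀..t, (t - s) ^ (α - 1) * φ s ≤ ∫ s in t₀..t, (t - s) ^ (α - 1) * ψ s :=
  intervalIntegral.integral_mono_on ht (intervalIntegrable_sub_rpow_mul hα ht hφ)
    (intervalIntegrable_sub_rpow_mul hα ht hψ) fun s hs =>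
      mul_le_mul_of_nonneg_left (hle s hs) (rpow_nonneg (sub_nonneg.2 hs.2) _)

lemma mul_integral_sub_rpow_mul_mittagLefflerTerm (hα : 0 < α) (ht : t₀ ≤ t) (C : ℝ) (k : ℕ) :
    C * ∫ s in t₀..t, (t - s) ^ (α - 1) * mittagLefflerTerm α (C * Gamma α * (s - t₀) ^ α) k
      = mittagLefflerTerm α (C * Gamma α * (t - t₀) ^ α) (k + 1) := by
  rcases ht.eq_or_lt with rfl | ht
  · simp [mittagLefflerTerm, zero_rpow hα.ne']
  have hterm : ∀ s ∈ uIcc t₀ t,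
      (t - s) ^ (α - 1) * mittagLefflerTerm α (C * Gamma α * (s - t₀) ^ α) k
        = (C * Gamma α) ^ k / Gamma (α * k + 1) * ((t - s) ^ (α - 1) * (s - t₀) ^ (α * k)) := by
    intro s hs
    rw [uIcc_of_le ht.le] at hs
    rw [mittagLefflerTerm, mul_pow, ← rpow_mul_natCast (sub_nonneg.2 hs.1)]
    ring
  rw [intervalIntegral.integral_congr hterm, intervalIntegral.integral_const_mul,
    integral_sub_rpow_mul_sub_rpow hα (neg_one_lt_zero.trans_le (by positivity)) ht]
  have hΓ : Gamma (α * k + 1) ≠ 0 := (Gamma_pos_of_pos (by positivity)).ne'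
  rw [mittagLefflerTerm, mul_pow _ ((t - t₀) ^ α), ← rpow_mul_natCast (sub_nonneg.2 ht.le)]
  push_cast
  rw [show α * (k + 1) = α + α * k by ring]
  field_simp
  ring

noncomputable def gronwallIterate (α t₀ C θ M : ℝ) (n : ℕ) (t : ℝ) : ℝ :=
  θ * ∑ k ∈ Finset.range n, mittagLefflerTerm α (C * Gamma α * (t - t₀) ^ α) k
    + M * mittagLefflerTerm α (C * Gamma α * (t - t₀) ^ α) n

lemma gronwallIterate_succ (hα : 0 < α) (ht : t₀ ≤ t) (C θ M : ℝ) (n : ℕ) :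
    θ + C * ∫ s in t₀..t, (t - s) ^ (α - 1) * gronwallIterate α t₀ C θ M n s
      = gronwallIterate α t₀ C θ M (n + 1) t := by
  have hterm : ∀ k : ℕ, Continuous fun s => mittagLefflerTerm α (C * Gamma α * (s - t₀) ^ α) k :=
    continuous_mittagLefflerTerm_rpow hα _ t₀
  have hint : ∀ {φ : ℝ → ℝ}, Continuous φ →
      IntervalIntegrable (fun s => (t - s) ^ (α - 1) * φ s) volume t₀ t := fun hφ =>
    intervalIntegrable_sub_rpow_mul hα ht hφ.continuousOn
  simp_rw [gronwallIterate, mul_add]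
  rw [intervalIntegral.integral_add (hint (by fun_prop)) (hint (by fun_prop))]
  simp_rw [mul_left_comm ((t - _) ^ (α - 1)), intervalIntegral.integral_const_mul,
    Finset.mul_sum (Finset.range n) _ ((t - _) ^ (α - 1))]
  rw [intervalIntegral.integral_finsetSum fun k _ => hint (hterm k)]
  simp_rw [mul_add, Finset.mul_sum, mul_left_comm C,
    mul_integral_sub_rpow_mul_mittagLefflerTerm hα ht]
  rw [Finset.sum_range_succ', mittagLefflerTerm_zero]
  ring

end Kernel

lemma le_gronwallIterate {α t₀ T C θ M : ℝ} {u : ℝ → ℝ} (hα : 0 < α) (hC : 0 ≤ C)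
    (hu : ContinuousOn u (Icc t₀ T)) (hM : ∀ t ∈ Icc t₀ T, u t ≤ M)
    (hineq : ∀ t ∈ Icc t₀ T, u t ≤ θ + C * ∫ s in t₀..t, (t - s) ^ (α - 1) * u s) (n : ℕ) :
    ∀ t ∈ Icc t₀ T, u t ≤ gronwallIterate α t₀ C θ M n t := by
  induction n with
  | zero => simpa [gronwallIterate] using hM
  | succ n ih =>
    intro t ht
    have hsub : Icc t₀ t ⊆ Icc t₀ T := Icc_subset_Icc_right ht.2
    have hG : Continuous (gronwallIterate α t₀ C θ M n) := by
      unfold gronwallIterate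
      have := continuous_mittagLefflerTerm_rpow hα (C * Gamma α) t₀
      fun_prop
    calc u t ≤ θ + C * ∫ s in t₀..t, (t - s) ^ (α - 1) * u s := hineq t ht
      _ ≤ θ + C * ∫ s in t₀..t, (t - s) ^ (α - 1) * gronwallIterate α t₀ C θ M n s := by
        gcongr
        exact integral_sub_rpow_mul_mono hα ht.1 (hu.mono hsub) hG.continuousOn
          fun s hs => ih s (hsub hs)
      _ = gronwallIterate α t₀ C θ M (n + 1) t := gronwallIterate_succ hα ht.1 C θ M n

theorem fractional_gronwall_general
    (α : ℝ) (hα : α ∈ Set.Ioo (0 : ℝ) 1)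
    (t₀ a : ℝ)
    (u : ℝ → ℝ) (hu : ContinuousOn u (Set.Icc t₀ (t₀ + a)))
    (θ C : ℝ) (hC : 0 ≤ C)
    (hineq : ∀ t ∈ Set.Icc t₀ (t₀ + a),
      u t ≤ θ + C * ∫ s in t₀..t, (t - s) ^ (α - 1) * u s) :
    ∀ t ∈ Set.Icc t₀ (t₀ + a),
      u t ≤ θ * ∑' k : ℕ,
        (C * Real.Gamma α * (t - t₀) ^ α) ^ k / Real.Gamma (α * k + 1) := by
  intro t ht
  obtain ⟨M, hM⟩ := isCompact_Icc.exists_bound_of_continuousOn hu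
  have hle := le_gronwallIterate hα.1 hC hu (fun s hs => (le_abs_self _).trans (hM s hs)) hineq
  have hsum := (summable_mittagLefflerTerm hα (C * Gamma α * (t - t₀) ^ α)).hasSum
  have hlim :=
    (hsum.tendsto_sum_nat.const_mul θ).add (hsum.summable.tendsto_atTop_zero.const_mul M)
  rw [mul_zero, add_zero] at hlim
  exact ge_of_tendsto' hlim fun n => hle n t ht

/-- Fractional (singular-kernel) Gronwall inequality: if `u` is continuous and nonnegative
on `I = [t₀, t₀+a]` and `u(t) ≤ θ + C ∫_{t₀}^{t} (t−s)^{α−1} u(s) ds` on `I`, then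
`u(t) ≤ θ · E_α(C Γ(α) (t−t₀)^α)`, where `E_α(z) = ∑_{k} z^k / Γ(αk+1)`. -/
theorem fractional_gronwall
    (α : ℝ) (hα : α ∈ Set.Ioo (0 : ℝ) 1)
    (t₀ a : ℝ) (ha : 0 < a)
    (u : ℝ → ℝ) (hu : ContinuousOn u (Set.Icc t₀ (t₀ + a)))
    (hu0 : ∀ t ∈ Set.Icc t₀ (t₀ + a), 0 ≤ u t)
    (θ C : ℝ) (hθ : 0 ≤ θ) (hC : 0 ≤ C)
    (hineq : ∀ t ∈ Set.Icc t₀ (t₀ + a),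
      u t ≤ θ + C * ∫ s in t₀..t, (t - s) ^ (α - 1) * u s) :
    ∀ t ∈ Set.Icc t₀ (t₀ + a),
      u t ≤ θ * ∑' k : ℕ,
        (C * Real.Gamma α * (t - t₀) ^ α) ^ k / Real.Gamma (α * k + 1) :=
  fractional_gronwall_general α hα t₀ a u hu θ C hC hineq
end
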